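/- There is an absolute constant C > 0 such that for all p ∈ ℝ², all ξ ∈ ℝ² with |ξ| ≤ 1, and i ∈ {1,2}: (1 − |p̂|²) |ξ_i + p̂_i| / (1 + p̂·ξ)² ≤ C / (p_0² (1 + p̂·ξ)^{3/2}) and (1 − |p̂|²) |ξ₁ p̂₂ − ξ₂ p̂₁| / (1 + p̂·ξ)² ≤ C / (p_0² (1 + p̂·ξ)^{3/2}). (These are the pointwise bounds on the Glassey–Schaeffer kernels of E_T and B_T in two dimensions; they follow since 1 − |p̂|² = 1/p_0² and |ξ + p̂| and |ξ ∧ p̂| are bounded by a constant times (1 + p̂·ξ)^{1/2}.) -/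

import Mathlib

open scoped RealInnerProductSpace

/-- `p₀ = √(1 + |p|²)` for `p ∈ ℝ²`. -/
noncomputable def pZero (p : EuclideanSpace ℝ (Fin 2)) : ℝ := Real.sqrt (1 + ‖p‖ ^ 2)

/-- `p̂ = p / p₀` for `p ∈ ℝ²`. -/
noncomputable def pHat (p : EuclideanSpace ℝ (Fin 2)) : EuclideanSpace ℝ (Fin 2) :=
  (pZero p)⁻¹ • p

/-! Since `1 - |p̂|² = 1 / p₀²`, both bounds (with `C = √2`) reduce to `v² ≤ 2 (1 + p̂·ξ)` for
`v = |ξᵢ + p̂ᵢ|` and `v = |ξ ∧ p̂|`, because then `v ≤ √2 (1 + p̂·ξ)^{1/2}`. For `a`, `b` in the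
closed unit ball, `|a + b|² = |a|² + |b|² + 2 a·b ≤ 2 (1 + a·b)`, and by Lagrange's identity
`(a ∧ b)² = |a|²|b|² - (a·b)² ≤ 1 - (a·b)² ≤ 2 (1 + a·b)`. -/

section UnitBall

variable {F : Type*} [NormedAddCommGroup F] [InnerProductSpace ℝ F]

lemma norm_add_sq_le_two_mul_one_add_inner {a b : F} (ha : ‖a‖ ≤ 1) (hb : ‖b‖ ≤ 1) :
    ‖a + b‖ ^ 2 ≤ 2 * (1 + ⟪a, b⟫) := by
  rw [norm_add_sq_real]
  nlinarith [norm_nonneg a, norm_nonneg b]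

lemma one_add_inner_pos {a b : F} (ha : ‖a‖ < 1) (hb : ‖b‖ ≤ 1) : 0 < 1 + ⟪a, b⟫ := by
  have hab : ‖a‖ * ‖b‖ < 1 := (mul_le_of_le_one_right (norm_nonneg a) hb).trans_lt ha
  linarith [neg_abs_le ⟪a, b⟫, abs_real_inner_le_norm a b]

end UnitBall

lemma sq_cross_add_sq_inner (a b : EuclideanSpace ℝ (Fin 2)) :
    (a 0 * b 1 - a 1 * b 0) ^ 2 + ⟪a, b⟫ ^ 2 = ‖a‖ ^ 2 * ‖b‖ ^ 2 := by
  simp only [EuclideanSpace.real_norm_sq_eq, PiLp.inner_apply, Fin.sum_univ_two,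
    RCLike.inner_apply, conj_trivial]
  ring

lemma sq_cross_le_two_mul_one_add_inner {a b : EuclideanSpace ℝ (Fin 2)} (ha : ‖a‖ ≤ 1)
    (hb : ‖b‖ ≤ 1) : (a 0 * b 1 - a 1 * b 0) ^ 2 ≤ 2 * (1 + ⟪a, b⟫) := by
  have hab : ‖a‖ ^ 2 * ‖b‖ ^ 2 ≤ 1 := by
    rw [← mul_pow]
    exact pow_le_one₀ (by positivity) (mul_le_one₀ ha (norm_nonneg b) hb)
  nlinarith [sq_cross_add_sq_inner a b, sq_nonneg (1 + ⟪a, b⟫)]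

lemma div_sq_le_sqrt_two_div_rpow {t v : ℝ} (ht : 0 < t) (hv : v ^ 2 ≤ 2 * t) :
    v / t ^ 2 ≤ √2 / t ^ ((3 : ℝ) / 2) := by
  have hsqrt : t ^ ((3 : ℝ) / 2) * √t = t ^ 2 := by
    rw [← Real.rpow_natCast t 2, Real.sqrt_eq_rpow, ← Real.rpow_add ht]
    norm_num
  calc v / t ^ 2 ≤ √(2 * t) / t ^ 2 := by gcongr; exact Real.le_sqrt_of_sq_le hv
    _ = √2 / t ^ ((3 : ℝ) / 2) := by
      rw [Real.sqrt_mul zero_le_two, ← hsqrt, mul_div_mul_right _ _ (by positivity)]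

section Momentum

variable (p : EuclideanSpace ℝ (Fin 2))

lemma pZero_pos : 0 < pZero p :=
  Real.sqrt_pos.mpr (by positivity)

lemma pZero_sq : pZero p ^ 2 = 1 + ‖p‖ ^ 2 :=
  Real.sq_sqrt (by positivity)

lemma norm_pHat_sq : ‖pHat p‖ ^ 2 = ‖p‖ ^ 2 / pZero p ^ 2 := by
  rw [pHat, norm_smul, norm_inv, Real.norm_of_nonneg (pZero_pos p).le, mul_pow, inv_pow,
    inv_mul_eq_div]

lemma one_sub_norm_pHat_sq : 1 - ‖pHat p‖ ^ 2 = (pZero p ^ 2)⁻¹ := by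
  have := pZero_pos p
  rw [norm_pHat_sq, pZero_sq]
  field_simp
  ring

lemma norm_pHat_lt_one : ‖pHat p‖ < 1 := by
  have hp := pZero_pos p
  have hsq : ‖pHat p‖ ^ 2 < 1 := by
    have : 0 < (pZero p ^ 2)⁻¹ := by positivity
    linarith [one_sub_norm_pHat_sq p]
  exact (sq_lt_one_iff₀ (norm_nonneg _)).mp hsq

lemma one_sub_norm_pHat_sq_mul_div_le {t v : ℝ} (ht : 0 < t) (hv : v ^ 2 ≤ 2 * t) :
    (1 - ‖pHat p‖ ^ 2) * v / t ^ 2 ≤ √2 / (pZero p ^ 2 * t ^ ((3 : ℝ) / 2)) := by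
  have := pZero_pos p
  rw [one_sub_norm_pHat_sq, inv_mul_eq_div, div_div, mul_comm (pZero p ^ 2),
    mul_comm (pZero p ^ 2), ← div_div, ← div_div]
  gcongr ?_ / _
  exact div_sq_le_sqrt_two_div_rpow ht hv

end Momentum

/-- **Pointwise bounds on the 2D Glassey–Schaeffer kernels of `E_T` and `B_T`.**
There is an absolute constant `C > 0` such that for `p ∈ ℝ²`, `|ξ| ≤ 1`, `i ∈ {1,2}`:
`(1 − |p̂|²)|ξᵢ + p̂ᵢ|/(1 + p̂·ξ)² ≤ C/(p₀²(1 + p̂·ξ)^{3/2})` and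
`(1 − |p̂|²)|ξ₁p̂₂ − ξ₂p̂₁|/(1 + p̂·ξ)² ≤ C/(p₀²(1 + p̂·ξ)^{3/2})`. -/
theorem kernel_bounds_ET_BT_2d :
    ∃ C : ℝ, 0 < C ∧
      ∀ (p ξ : EuclideanSpace ℝ (Fin 2)), ‖ξ‖ ≤ 1 → ∀ i : Fin 2,
        (1 - ‖pHat p‖ ^ 2) * |ξ i + pHat p i| / (1 + ⟪pHat p, ξ⟫) ^ 2
            ≤ C / (pZero p ^ 2 * (1 + ⟪pHat p, ξ⟫) ^ ((3 : ℝ) / 2))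
        ∧ (1 - ‖pHat p‖ ^ 2) * |ξ 0 * pHat p 1 - ξ 1 * pHat p 0| / (1 + ⟪pHat p, ξ⟫) ^ 2
            ≤ C / (pZero p ^ 2 * (1 + ⟪pHat p, ξ⟫) ^ ((3 : ℝ) / 2)) := by
  refine ⟨√2, by positivity, fun p ξ hξ i => ⟨?_, ?_⟩⟩ <;>
    refine one_sub_norm_pHat_sq_mul_div_le p (one_add_inner_pos (norm_pHat_lt_one p) hξ) ?_ <;>
    rw [sq_abs, real_inner_comm]
  · calc (ξ i + pHat p i) ^ 2 ≤ ‖ξ + pHat p‖ ^ 2 := by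
          rw [← sq_abs]
          gcongr
          exact PiLp.norm_apply_le (ξ + pHat p) i
      _ ≤ 2 * (1 + ⟪ξ, pHat p⟫) :=
          norm_add_sq_le_two_mul_one_add_inner hξ (norm_pHat_lt_one p).le
  · exact sq_cross_le_two_mul_one_add_inner hξ (norm_pHat_lt_one p).le
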